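/- arXiv:2010.00245 — 4 statements merged into one kernel-verified Lean document; each statement's English description precedes it below -/
import Mathlib

section
/- (Blichfeldt's theorem) If τ is a full-rank lattice in ℝ^n and X ⊆ ℝ^n is a measurable set with vol(X) > det(τ), then there exist two distinct points z₁, z₂ ∈ X such that z₁ − z₂ ∈ τ. -/
/-!
The columns of `A` form a basis of `ℝⁿ` whose half-open parallelepiped is a fundamental domain
for `τ`, of volume `|det A|`. Its lattice translates tile `ℝⁿ`, so if the pieces of `X` in the
translates, moved back into the parallelepiped, were pairwise disjoint, `vol X` could not exceed
`|det A|`; two of them meet, giving `z₁ ≠ z₂` in `X` differing by a lattice vector.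
-/

open MeasureTheory Module Set Submodule

namespace Matrix

variable {ι : Type*} [Fintype ι] [DecidableEq ι]

section CommRing

variable {R : Type*} [CommRing R]

noncomputable def colBasis (A : Matrix ι ι R) (hA : IsUnit A.det) : Basis ι R (ι → R) :=
  (Pi.basisFun R ι).map (A.toLinearEquiv' (A.invertibleOfIsUnitDet hA))

variable (A : Matrix ι ι R) (hA : IsUnit A.det)

@[simp]
theorem colBasis_apply (i : ι) : A.colBasis hA i = A.col i := by
  simp only [colBasis, Basis.map_apply, Pi.basisFun_apply]
  exact A.mulVec_single_one i

theorem mem_span_int_colBasis_iff {v : ι → R} :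
    v ∈ span ℤ (range (A.colBasis hA)) ↔ ∃ x : ι → ℤ, v = A *ᵥ fun j => (x j : R) := by
  have hcomb (x : ι → ℤ) : ∑ i, x i • A.col i = A *ᵥ fun j => (x j : R) := by
    ext k
    simp [mulVec, dotProduct, mul_comm]
  simp only [mem_span_range_iff_exists_fun, colBasis_apply, hcomb, eq_comm]

end CommRing

theorem volume_fundamentalDomain_colBasis (A : Matrix ι ι ℝ) (hA : IsUnit A.det) :
    volume (ZSpan.fundamentalDomain (A.colBasis hA)) = ENNReal.ofReal |A.det| := by
  have hcols : of (A.colBasis hA) = Aᵀ := by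
    ext i j
    simp
  rw [ZSpan.volume_fundamentalDomain, hcols, det_transpose]

end Matrix

theorem ZSpan.exists_ne_sub_mem_of_measure_fundamentalDomain_lt {ι E : Type*} [Finite ι]
    [NormedAddCommGroup E] [NormedSpace ℝ E] [MeasurableSpace E] [BorelSpace E]
    (b : Basis ι ℝ E) {μ : Measure E} [μ.IsAddLeftInvariant] {X : Set E}
    (hX : NullMeasurableSet X μ) (hμ : μ (fundamentalDomain b) < μ X) :
    ∃ z₁ ∈ X, ∃ z₂ ∈ X, z₁ ≠ z₂ ∧ z₁ - z₂ ∈ span ℤ (range b) := by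
  have : Countable (span ℤ (range b)).toAddSubgroup := inferInstanceAs (Countable (span ℤ _))
  obtain ⟨x, hx, y, hy, g, hg, rfl⟩ :=
    (ZSpan.isAddFundamentalDomain' b μ).exists_ne_zero_vadd_eq hX hμ
  refine ⟨g +ᵥ x, hy, x, hx, ?_, ?_⟩
  · simpa [AddSubgroup.vadd_def] using hg
  · simp [AddSubgroup.vadd_def]

theorem stmt_4 {n : ℕ} (A : Matrix (Fin n) (Fin n) ℝ) (hA : IsUnit A.det)
    (X : Set (Fin n → ℝ)) (hX : MeasurableSet X)
    (hvol : ENNReal.ofReal |A.det| < volume X) :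
    ∃ z₁ ∈ X, ∃ z₂ ∈ X, z₁ ≠ z₂ ∧
      ∃ x : Fin n → ℤ, z₁ - z₂ = A.mulVec fun j => (x j : ℝ) := by
  rw [← A.volume_fundamentalDomain_colBasis hA] at hvol
  obtain ⟨z₁, hz₁, z₂, hz₂, hne, hmem⟩ :=
    ZSpan.exists_ne_sub_mem_of_measure_fundamentalDomain_lt _ hX.nullMeasurableSet hvol
  exact ⟨z₁, hz₁, z₂, hz₂, hne, (A.mem_span_int_colBasis_iff hA).1 hmem⟩
end

section
/- (Minkowski's first theorem) For any full-rank lattice τ of rank n, the shortest nonzero lattice vector satisfies λ₁(τ) ≤ √n · (det τ)^{1/n}. -/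
/-- The full-rank lattice in Euclidean space generated by the columns of `A`. -/
def latticeOf {n : ℕ} (A : Matrix (Fin n) (Fin n) ℝ) : Set (EuclideanSpace ℝ (Fin n)) :=
  {v | ∃ x : Fin n → ℤ, ∀ i, v i = A.mulVec (fun j => (x j : ℝ)) i}

/-!
The sup-norm ball of radius `D = |det A|^(1/n)` is a symmetric convex body of volume
`(2D)^n = 2^n |det A|`, i.e. `2^n` times the covolume of the lattice, so Minkowski's convex body
theorem yields a nonzero lattice vector in it. Passing from the sup norm to the Euclidean norm costs
at most a factor `√n`.
-/

open MeasureTheory Module Submodule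

namespace Matrix

variable {ι : Type*} [Fintype ι] [DecidableEq ι]

noncomputable def columnBasis (A : Matrix ι ι ℝ) (hA : IsUnit A.det) : Basis ι ℝ (ι → ℝ) :=
  (Pi.basisFun ℝ ι).map (A.toLinearEquiv' (A.invertibleOfIsUnitDet hA))

variable {A : Matrix ι ι ℝ} {hA : IsUnit A.det}

@[simp]
lemma columnBasis_apply (j : ι) : A.columnBasis hA j = A.col j := by
  simp only [columnBasis, Basis.map_apply, Pi.basisFun_apply]
  exact mulVec_single_one A j

lemma of_columnBasis : Matrix.of (A.columnBasis hA) = Aᵀ := by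
  ext
  simp

lemma exists_eq_mulVec_of_mem_span_columnBasis {x : ι → ℝ}
    (hx : x ∈ span ℤ (Set.range (A.columnBasis hA))) :
    ∃ c : ι → ℤ, x = A *ᵥ fun j => (c j : ℝ) := by
  obtain ⟨c, rfl⟩ := (mem_span_range_iff_exists_fun ℤ).mp hx
  refine ⟨c, funext fun i => ?_⟩
  simp [mulVec, dotProduct, mul_comm]

end Matrix

theorem EuclideanSpace.norm_toLp_le_sqrt_card_mul {ι : Type*} [Fintype ι] (x : ι → ℝ) :
    ‖WithLp.toLp 2 x‖ ≤ √(Fintype.card ι) * ‖x‖ := by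
  rw [EuclideanSpace.norm_eq, ← Real.sqrt_sq (norm_nonneg x), ← Real.sqrt_mul (by positivity)]
  gcongr
  calc ∑ i, ‖x i‖ ^ 2 ≤ ∑ _i : ι, ‖x‖ ^ 2 := by gcongr with i; exact norm_le_pi_norm x i
    _ = _ := by simp

theorem ZSpan.exists_ne_zero_mem_span_norm_le {ι : Type*} [Fintype ι] [DecidableEq ι]
    [Nonempty ι] (b : Basis ι ℝ (ι → ℝ)) {D : ℝ} (hD₀ : 0 ≤ D)
    (hD : |(Matrix.of b).det| ≤ D ^ Fintype.card ι) :
    ∃ x ∈ span ℤ (Set.range b), x ≠ 0 ∧ ‖x‖ ≤ D := by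
  have hvol : volume (fundamentalDomain b) * 2 ^ finrank ℝ (ι → ℝ)
      ≤ volume (Metric.closedBall (0 : ι → ℝ) D) := by
    rw [volume_fundamentalDomain, Real.volume_pi_closedBall _ hD₀, finrank_fintype_fun_eq_card,
      mul_pow, ENNReal.ofReal_mul (pow_nonneg zero_le_two _), ENNReal.ofReal_pow zero_le_two,
      ENNReal.ofReal_ofNat, mul_comm]
    gcongr
  have : Countable (span ℤ (Set.range b)).toAddSubgroup :=
    inferInstanceAs (Countable (span ℤ (Set.range b)))
  obtain ⟨x, hx0, hxD⟩ := exists_ne_zero_mem_lattice_of_measure_mul_two_pow_le_measure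
    (ZSpan.isAddFundamentalDomain' b volume) (fun x hx => by simpa using hx)
    (convex_closedBall 0 D) (isCompact_closedBall 0 D) hvol
  exact ⟨x, x.2, by simpa using hx0, by simpa using hxD⟩

theorem sInf_norm_latticeOf_le {n : ℕ} {A : Matrix (Fin n) (Fin n) ℝ}
    {v : EuclideanSpace ℝ (Fin n)} (hv : v ∈ latticeOf A) (hv0 : v ≠ 0) :
    sInf {r : ℝ | ∃ v ∈ latticeOf A, v ≠ 0 ∧ r = ‖v‖} ≤ ‖v‖ := by
  refine csInf_le ⟨0, ?_⟩ ⟨v, hv, hv0, rfl⟩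
  rintro _ ⟨w, -, -, rfl⟩
  exact norm_nonneg w

theorem stmt_7 {n : ℕ} (hn : 0 < n) (A : Matrix (Fin n) (Fin n) ℝ) (hA : IsUnit A.det) :
    sInf {r : ℝ | ∃ v ∈ latticeOf A, v ≠ 0 ∧ r = ‖v‖} ≤
      Real.sqrt n * |A.det| ^ ((1 : ℝ) / n) := by
  have : Nonempty (Fin n) := ⟨⟨0, hn⟩⟩
  have hpow : (|A.det| ^ ((1 : ℝ) / n)) ^ n = |A.det| := by
    rw [one_div, Real.rpow_inv_natCast_pow (abs_nonneg _) hn.ne']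
  obtain ⟨x, hx, hx0, hxD⟩ := ZSpan.exists_ne_zero_mem_span_norm_le (A.columnBasis hA)
    (D := |A.det| ^ ((1 : ℝ) / n)) (by positivity)
    (by rw [Matrix.of_columnBasis, Matrix.det_transpose, Fintype.card_fin, hpow])
  obtain ⟨c, rfl⟩ := Matrix.exists_eq_mulVec_of_mem_span_columnBasis hx
  calc _ ≤ ‖WithLp.toLp 2 (A.mulVec fun j => (c j : ℝ))‖ :=
        sInf_norm_latticeOf_le ⟨c, fun i => rfl⟩ (by simpa using hx0)
    _ ≤ √n * ‖A.mulVec fun j => (c j : ℝ)‖ := by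
        simpa using EuclideanSpace.norm_toLp_le_sqrt_card_mul (A.mulVec fun j => (c j : ℝ))
    _ ≤ _ := by gcongr
end

section
/- (Minkowski's second theorem, lower bound) For any full-rank lattice τ of rank n, the successive minima satisfy ∏_{i=1}^n λ_i(τ) ≥ (2^n/n!)·det(τ)·(√n/2)^n, i.e. det(τ) ≤ (n!/n^{n/2}) ∏_{i=1}^n λ_i(τ). -/
/-- The `i`-th successive minimum of a set `τ ⊆ ℝ^n`: the infimum of radii `r`
such that the span of `τ ∩ B̄(0, r)` has dimension at least `i`. -/
noncomputable def succMin {n : ℕ} (τ : Set (EuclideanSpace ℝ (Fin n))) (i : ℕ) : ℝ :=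
  sInf {r : ℝ | i ≤ Module.finrank ℝ (Submodule.span ℝ (τ ∩ Metric.closedBall 0 r))}

open Module Submodule Metric Finset

/-- Hadamard's inequality, from the volume-form bound in mathlib. -/
lemma my_hadamard {n : ℕ} (v : Fin n → EuclideanSpace ℝ (Fin n)) :
    |(Matrix.of fun i j => v j i).det| ≤ ∏ i : Fin n, ‖v i‖ := by
  haveI : Fact (finrank ℝ (EuclideanSpace ℝ (Fin n)) = n) := ⟨finrank_euclideanSpace_fin⟩
  let b := EuclideanSpace.basisFun (Fin n) ℝ
  let o : Orientation ℝ (EuclideanSpace ℝ (Fin n)) (Fin n) := b.toBasis.orientation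
  have h1 : b.toBasis.det v = (Matrix.of fun i j => v j i).det := by
    rw [Basis.det_apply]
    congr 1
  calc |(Matrix.of fun i j => v j i).det| = |b.toBasis.det v| := by rw [h1]
    _ = |o.volumeForm v| := (o.volumeForm_robust' b v).symm
    _ ≤ ∏ i : Fin n, ‖v i‖ := o.abs_volumeForm_apply_le v

lemma my_nat_pow_le_factorial_sq (n : ℕ) : n ^ n ≤ n.factorial ^ 2 := by
  have h : n.factorial * n.factorial = ∏ i ∈ Finset.range n, ((i + 1) * (n - i)) :=
    calc n.factorial * n.factorial
        = (∏ i ∈ Finset.range n, (n - 1 - i + 1)) * ∏ i ∈ Finset.range n, (i + 1) := by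
          rw [Finset.prod_range_reflect (fun i => i + 1) n,
            Finset.prod_range_add_one_eq_factorial]
      _ = ∏ i ∈ Finset.range n, ((n - 1 - i + 1) * (i + 1)) := (Finset.prod_mul_distrib).symm
      _ = ∏ i ∈ Finset.range n, ((i + 1) * (n - i)) := Finset.prod_congr rfl (fun i hi => by
          have hi' : i < n := Finset.mem_range.1 hi
          have h3 : n - 1 - i + 1 = n - i := by omega
          rw [h3, Nat.mul_comm])
  rw [sq, h]
  calc n ^ n = ∏ _i ∈ Finset.range n, n := by rw [Finset.prod_const, Finset.card_range]
    _ ≤ ∏ i ∈ Finset.range n, ((i + 1) * (n - i)) := by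
        apply Finset.prod_le_prod'
        intro i hi
        have hi' : i < n := Finset.mem_range.1 hi
        have h1 : 1 ≤ n - i := by omega
        have h2 : i ≤ i * (n - i) := Nat.le_mul_of_pos_right i h1
        calc n = i + (n - i) := by omega
          _ ≤ i * (n - i) + (n - i) := by omega
          _ = (i + 1) * (n - i) := by ring

lemma my_rank_mono {n : ℕ} (τ : Set (EuclideanSpace ℝ (Fin n))) {r r' : ℝ} (h : r ≤ r') :
    finrank ℝ (span ℝ (τ ∩ closedBall 0 r)) ≤ finrank ℝ (span ℝ (τ ∩ closedBall 0 r')) :=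
  Submodule.finrank_mono (span_mono
    (Set.inter_subset_inter_right _ (closedBall_subset_closedBall h)))

lemma my_exists_R {n : ℕ} (A : Matrix (Fin n) (Fin n) ℝ) (hA : IsUnit A.det) :
    ∃ R : ℝ, n ≤ finrank ℝ (span ℝ (latticeOf A ∩ closedBall 0 R)) := by
  classical
  set c : Fin n → EuclideanSpace ℝ (Fin n) := fun j => WithLp.toLp 2 (fun i => A i j) with hc
  have hmem : ∀ j, c j ∈ latticeOf A := by
    intro j
    refine ⟨Pi.single j 1, fun i => ?_⟩
    have hcast : (fun l => ((Pi.single j (1:ℤ) : Fin n → ℤ) l : ℝ)) = Pi.single j (1:ℝ) := by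
      ext l
      by_cases h : l = j <;> simp [h, Pi.single_apply]
    rw [hcast]
    simp [Matrix.mulVec_single, hc]
  have hli : LinearIndependent ℝ c := by
    have h1 : LinearIndependent ℝ (fun j => A.transpose j) :=
      Matrix.linearIndependent_cols_iff_isUnit.2 ((Matrix.isUnit_iff_isUnit_det A).2 hA)
    exact h1.map' (WithLp.linearEquiv 2 ℝ (Fin n → ℝ)).symm.toLinearMap (LinearEquiv.ker _)
  refine ⟨∑ j : Fin n, ‖c j‖, ?_⟩
  have hsub : Set.range c ⊆ latticeOf A ∩ closedBall 0 (∑ j : Fin n, ‖c j‖) := by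
    rintro _ ⟨j, rfl⟩
    refine ⟨hmem j, mem_closedBall_zero_iff.2 ?_⟩
    exact Finset.single_le_sum (f := fun j => ‖c j‖) (fun i _ => norm_nonneg _) (mem_univ j)
  have h2 : span ℝ (Set.range c) ≤ span ℝ (latticeOf A ∩ closedBall 0 (∑ j : Fin n, ‖c j‖)) :=
    span_mono hsub
  have := Submodule.finrank_mono h2
  rw [finrank_span_eq_card hli] at this
  simpa using this

lemma my_succMin_nonneg {n : ℕ} (τ : Set (EuclideanSpace ℝ (Fin n))) {k : ℕ} (hk : 0 < k) :
    0 ≤ succMin τ k := by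
  apply Real.sInf_nonneg
  intro r hr
  by_contra hneg
  push_neg at hneg
  have h1 : closedBall (0 : EuclideanSpace ℝ (Fin n)) r = ∅ := closedBall_eq_empty.2 hneg
  rw [Set.mem_setOf_eq, h1, Set.inter_empty, span_empty, finrank_bot] at hr
  omega

lemma my_rank_at_succMin_add {n : ℕ} (A : Matrix (Fin n) (Fin n) ℝ) (hA : IsUnit A.det)
    {k : ℕ} (hk : 0 < k) (hkn : k ≤ n) {ε : ℝ} (hε : 0 < ε) :
    k ≤ finrank ℝ (span ℝ (latticeOf A ∩ closedBall 0 (succMin (latticeOf A) k + ε))) := by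
  obtain ⟨R, hR⟩ := my_exists_R A hA
  set S := {r : ℝ | k ≤ finrank ℝ (span ℝ (latticeOf A ∩ closedBall 0 r))} with hS
  have hne : S.Nonempty := ⟨R, le_trans hkn hR⟩
  have hbdd : BddBelow S := by
    refine ⟨0, fun r hr => ?_⟩
    by_contra hneg
    push_neg at hneg
    have h1 : closedBall (0 : EuclideanSpace ℝ (Fin n)) r = ∅ := closedBall_eq_empty.2 hneg
    have hr' : k ≤ finrank ℝ (span ℝ (latticeOf A ∩ closedBall 0 r)) := hr
    rw [h1, Set.inter_empty, span_empty, finrank_bot] at hr'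
    omega
  have hlt : sInf S < succMin (latticeOf A) k + ε := lt_add_of_pos_right _ hε
  obtain ⟨r, hrS, hr⟩ := (csInf_lt_iff hbdd hne).1 hlt
  exact le_trans hrS (my_rank_mono _ (le_of_lt hr))

lemma my_exists_indep {n : ℕ} (A : Matrix (Fin n) (Fin n) ℝ) (hA : IsUnit A.det)
    {ε : ℝ} (hε : 0 < ε) :
    ∀ k, k ≤ n → ∃ v : Fin k → EuclideanSpace ℝ (Fin n),
      LinearIndependent ℝ v ∧
      ∀ j : Fin k, v j ∈ latticeOf A ∧ ‖v j‖ ≤ succMin (latticeOf A) ((j : ℕ) + 1) + ε := by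
  intro k
  induction k with
  | zero => exact fun _ => ⟨fun j => j.elim0, linearIndependent_empty_type, fun j => j.elim0⟩
  | succ k ih =>
    intro hkn
    obtain ⟨v, hli, hprop⟩ := ih (le_trans (Nat.le_succ k) hkn)
    have hrank := my_rank_at_succMin_add A hA (k := k + 1) (by omega) hkn hε
    have hvrank : finrank ℝ (span ℝ (Set.range v)) = k := by
      rw [finrank_span_eq_card hli, Fintype.card_fin]
    have hw : ∃ w ∈ latticeOf A ∩ closedBall 0 (succMin (latticeOf A) (k + 1) + ε),
        w ∉ span ℝ (Set.range v) := by
      by_contra hcon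
      push_neg at hcon
      have hsub : latticeOf A ∩ closedBall 0 (succMin (latticeOf A) (k + 1) + ε)
          ⊆ (span ℝ (Set.range v) : Set (EuclideanSpace ℝ (Fin n))) := fun w hw => hcon w hw
      have := Submodule.finrank_mono (span_le.2 hsub)
      rw [hvrank] at this
      omega
    obtain ⟨w, hwmem, hwspan⟩ := hw
    refine ⟨Fin.snoc v w, linearIndependent_fin_snoc.2 ⟨hli, hwspan⟩, ?_⟩
    intro j
    refine Fin.lastCases ?_ ?_ j
    · rw [Fin.snoc_last]
      exact ⟨hwmem.1, by simpa [Fin.val_last] using mem_closedBall_zero_iff.1 hwmem.2⟩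
    · intro i
      rw [Fin.snoc_castSucc]
      simpa [Fin.coe_castSucc] using hprop i

lemma my_main_eps {n : ℕ} (A : Matrix (Fin n) (Fin n) ℝ) (hA : IsUnit A.det)
    {ε : ℝ} (hε : 0 < ε) :
    |A.det| ≤ ∏ i : Fin n, (succMin (latticeOf A) ((i : ℕ) + 1) + ε) := by
  obtain ⟨v, hli, hprop⟩ := my_exists_indep A hA hε n le_rfl
  choose x hx using fun j => (hprop j).1
  set X : Matrix (Fin n) (Fin n) ℤ := Matrix.of fun l j => x j l with hX
  set V : Matrix (Fin n) (Fin n) ℝ := Matrix.of fun i j => v j i with hV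
  have hVeq : V = A * X.map (Int.cast : ℤ → ℝ) := by
    ext i j
    rw [Matrix.mul_apply]
    simp only [hV, Matrix.of_apply, Matrix.map_apply]
    rw [hx j i]
    simp [Matrix.mulVec, dotProduct, hX]
  have hdet : V.det = A.det * ((X.det : ℤ) : ℝ) := by
    rw [hVeq, Matrix.det_mul]
    congr 1
    exact (RingHom.map_det (Int.castRingHom ℝ) X).symm
  have hVu : IsUnit V := by
    apply Matrix.linearIndependent_cols_iff_isUnit.1
    have h0 : (fun j => V.transpose j) = fun j => (v j : Fin n → ℝ) := by
      ext j i
      rfl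
    rw [show V.col = fun j => V.transpose j from rfl, h0]
    exact hli.map' (WithLp.linearEquiv 2 ℝ (Fin n → ℝ)).toLinearMap (LinearEquiv.ker _)
  have hVdet : V.det ≠ 0 := ((Matrix.isUnit_iff_isUnit_det V).1 hVu).ne_zero
  have hXdet : X.det ≠ 0 := by
    intro h
    rw [h] at hdet
    simp at hdet
    exact hVdet hdet
  have hXone : (1 : ℝ) ≤ |((X.det : ℤ) : ℝ)| := by
    rw [← Int.cast_abs]
    exact_mod_cast Int.one_le_abs hXdet
  have h1 : |A.det| ≤ |V.det| := by
    rw [hdet, abs_mul]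
    nlinarith [abs_nonneg A.det]
  calc |A.det| ≤ |V.det| := h1
    _ ≤ ∏ i : Fin n, ‖v i‖ := my_hadamard v
    _ ≤ ∏ i : Fin n, (succMin (latticeOf A) ((i : ℕ) + 1) + ε) := by
        apply Finset.prod_le_prod (fun i _ => norm_nonneg _)
        exact fun i _ => (hprop i).2

theorem stmt_10 {n : ℕ} (hn : 0 < n) (A : Matrix (Fin n) (Fin n) ℝ) (hA : IsUnit A.det) :
    |A.det| ≤ (n.factorial / Real.sqrt n ^ n) * ∏ i : Fin n, succMin (latticeOf A) (i + 1) := by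
  have hsqrt_pos : 0 < Real.sqrt n ^ n :=
    pow_pos (Real.sqrt_pos.2 (by exact_mod_cast hn)) n
  have hC : (1 : ℝ) ≤ n.factorial / Real.sqrt n ^ n := by
    rw [le_div_iff₀ hsqrt_pos, one_mul]
    have h2 : (Real.sqrt n ^ n) ^ 2 ≤ ((n.factorial : ℝ)) ^ 2 := by
      have h0 : (Real.sqrt n ^ n) ^ 2 = (n : ℝ) ^ n := by
        rw [← pow_mul, mul_comm n 2, pow_mul, Real.sq_sqrt (by positivity)]
      rw [h0]
      exact_mod_cast my_nat_pow_le_factorial_sq n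
    exact (abs_le_of_sq_le_sq' h2 (by positivity)).2.trans_eq rfl
  have key : ∀ ε : ℝ, 0 < ε →
      |A.det| ≤ (n.factorial / Real.sqrt n ^ n) *
        ∏ i : Fin n, (succMin (latticeOf A) (i + 1) + ε) := by
    intro ε hε
    have h1 := my_main_eps A hA hε
    have h2 : (0:ℝ) ≤ ∏ i : Fin n, (succMin (latticeOf A) ((i : ℕ) + 1) + ε) := by
      apply Finset.prod_nonneg
      intro i _
      have := my_succMin_nonneg (latticeOf A) (k := (i : ℕ) + 1) (Nat.succ_pos _)
      linarith
    calc |A.det| ≤ ∏ i : Fin n, (succMin (latticeOf A) ((i : ℕ) + 1) + ε) := h1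
      _ = 1 * ∏ i : Fin n, (succMin (latticeOf A) ((i : ℕ) + 1) + ε) := (one_mul _).symm
      _ ≤ (n.factorial / Real.sqrt n ^ n) * ∏ i : Fin n, (succMin (latticeOf A) (i + 1) + ε) :=
          mul_le_mul_of_nonneg_right hC h2
  have hcont : ContinuousAt (fun ε : ℝ =>
      (n.factorial / Real.sqrt n ^ n) * ∏ i : Fin n, (succMin (latticeOf A) (i + 1) + ε)) 0 := by
    apply Continuous.continuousAt
    exact continuous_const.mul (continuous_finset_prod _ (fun i _ => by continuity))
  have htend : Filter.Tendsto (fun ε : ℝ =>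
      (n.factorial / Real.sqrt n ^ n) * ∏ i : Fin n, (succMin (latticeOf A) (i + 1) + ε))
      (nhdsWithin 0 (Set.Ioi 0))
      (nhds ((n.factorial / Real.sqrt n ^ n) * ∏ i : Fin n, (succMin (latticeOf A) (i + 1) + 0))) :=
    (hcont.tendsto).mono_left nhdsWithin_le_nhds
  have hfin := ge_of_tendsto htend (by
    filter_upwards [self_mem_nhdsWithin] with ε hε
    exact key ε hε)
  simpa using hfin
end

section
/- A nonzero lattice vector v ∈ τ is a Voronoï vector of τ if and only if v is a vector of minimal Euclidean norm in the coset v + 2τ. -/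
/-- The Voronoï cell of a lattice: points at least as close to `0` as to every
lattice point. -/
def voronoiCell {n : ℕ} (τ : Set (EuclideanSpace ℝ (Fin n))) : Set (EuclideanSpace ℝ (Fin n)) :=
  {z | ∀ x ∈ τ, ‖z‖ ≤ ‖z - x‖}

/-!
If `z` lies in the Voronoï cell and on the bisecting hyperplane of `v`, then testing the cell
condition against the lattice points `-x` and `v + x` and adding gives
`‖v‖² ≤ ‖x‖² + ‖v + x‖²`; by the parallelogram law the right side is `(‖v + 2x‖² + ‖v‖²) / 2`.
Conversely, if `v` is shortest in `v + 2τ`, then `v / 2` is in the cell, because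
`‖v / 2 - u‖ = ‖v - 2u‖ / 2`.
-/

open scoped RealInnerProductSpace

section VoronoiVector

variable {E : Type*} [NormedAddCommGroup E] [InnerProductSpace ℝ E]

lemma norm_le_norm_sub_iff_two_inner_le {z y : E} : ‖z‖ ≤ ‖z - y‖ ↔ 2 * ⟪z, y⟫ ≤ ‖y‖ ^ 2 := by
  rw [← sq_le_sq₀ (norm_nonneg _) (norm_nonneg _), norm_sub_sq_real]
  constructor <;> intro h <;> linarith

lemma norm_le_norm_add_two_smul_of_mem_voronoi {L : AddSubgroup E} {z v x : E}
    (hz : ∀ y ∈ L, ‖z‖ ≤ ‖z - y‖) (hv : v ∈ L) (hzv : ⟪z, v⟫ = 1 / 2 * ⟪v, v⟫) (hx : x ∈ L) :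
    ‖v‖ ≤ ‖v + (2 : ℝ) • x‖ := by
  have h_neg := norm_le_norm_sub_iff_two_inner_le.1 (hz (-x) (neg_mem hx))
  have h_add := norm_le_norm_sub_iff_two_inner_le.1 (hz (v + x) (add_mem hv hx))
  rw [inner_neg_right, norm_neg] at h_neg
  rw [inner_add_right] at h_add
  have h_para := parallelogram_law_with_norm ℝ (v + x) x
  rw [add_sub_cancel_right, add_assoc, ← two_smul ℝ x] at h_para
  rw [real_inner_self_eq_norm_sq] at hzv
  rw [← sq_le_sq₀ (norm_nonneg _) (norm_nonneg _)]
  linarith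

lemma norm_half_smul_le_norm_half_smul_sub {L : AddSubgroup E} {v : E}
    (hmin : ∀ x ∈ L, ‖v‖ ≤ ‖v + (2 : ℝ) • x‖) {u : E} (hu : u ∈ L) :
    ‖(1 / 2 : ℝ) • v‖ ≤ ‖(1 / 2 : ℝ) • v - u‖ := by
  have h_half : (1 / 2 : ℝ) • v - u = (1 / 2 : ℝ) • (v + (2 : ℝ) • -u) := by
    rw [smul_add, smul_smul, smul_neg]
    norm_num [sub_eq_add_neg]
  rw [h_half, norm_smul, norm_smul]
  exact mul_le_mul_of_nonneg_left (hmin (-u) (neg_mem hu)) (norm_nonneg _)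

theorem exists_mem_voronoi_inner_eq_iff {L : AddSubgroup E} {v : E} (hv : v ∈ L) :
    (∃ z : E, (∀ y ∈ L, ‖z‖ ≤ ‖z - y‖) ∧ ⟪z, v⟫ = 1 / 2 * ⟪v, v⟫) ↔
      ∀ x ∈ L, ‖v‖ ≤ ‖v + (2 : ℝ) • x‖ :=
  ⟨fun ⟨_, hz, hzv⟩ _ hx => norm_le_norm_add_two_smul_of_mem_voronoi hz hv hzv hx,
    fun hmin => ⟨(1 / 2 : ℝ) • v, fun _ hu => norm_half_smul_le_norm_half_smul_sub hmin hu,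
      real_inner_smul_left v v _⟩⟩

end VoronoiVector

def latticeAddSubgroup {n : ℕ} (A : Matrix (Fin n) (Fin n) ℝ) :
    AddSubgroup (EuclideanSpace ℝ (Fin n)) where
  carrier := latticeOf A
  zero_mem' := ⟨0, fun i => by simp [Matrix.mulVec, dotProduct]⟩
  add_mem' := by
    rintro _ _ ⟨c, hc⟩ ⟨d, hd⟩
    exact ⟨c + d, fun i => by
      rw [PiLp.add_apply, hc i, hd i, ← Pi.add_apply, ← Matrix.mulVec_add]
      simp only [Int.cast_add, Pi.add_def]⟩
  neg_mem' := by
    rintro _ ⟨c, hc⟩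
    exact ⟨-c, fun i => by
      rw [PiLp.neg_apply, hc i, ← Pi.neg_apply, ← Matrix.mulVec_neg]
      simp only [Int.cast_neg, Pi.neg_def]⟩

theorem stmt_13_general {n : ℕ} (A : Matrix (Fin n) (Fin n) ℝ)
    (v : EuclideanSpace ℝ (Fin n)) (hv : v ∈ latticeOf A) :
    (∃ z ∈ voronoiCell (latticeOf A),
        (inner ℝ z v : ℝ) = (1 / 2 : ℝ) * (inner ℝ v v : ℝ)) ↔
      (∀ w : EuclideanSpace ℝ (Fin n), (∃ x ∈ latticeOf A, w = v + (2 : ℝ) • x) →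
        ‖v‖ ≤ ‖w‖) := by
  refine (exists_mem_voronoi_inner_eq_iff (L := latticeAddSubgroup A) hv).trans
    ⟨fun hmin _ ⟨x, hx, hw⟩ => hw ▸ hmin x hx, fun hmin x hx => hmin _ ⟨x, hx, rfl⟩⟩

theorem stmt_13 {n : ℕ} (A : Matrix (Fin n) (Fin n) ℝ) (hA : IsUnit A.det)
    (v : EuclideanSpace ℝ (Fin n)) (hv : v ∈ latticeOf A) (hv0 : v ≠ 0) :
    (∃ z ∈ voronoiCell (latticeOf A),
        (inner ℝ z v : ℝ) = (1 / 2 : ℝ) * (inner ℝ v v : ℝ)) ↔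
      (∀ w : EuclideanSpace ℝ (Fin n), (∃ x ∈ latticeOf A, w = v + (2 : ℝ) • x) →
        ‖v‖ ≤ ‖w‖) :=
  stmt_13_general A v hv
end
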